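/- Let G be a connected nontrivial simple graph with m vertices and let n ≥ 4. Then the restricted edge-connectivity of the strong product G ⊠ K_n of G with the complete graph K_n on n vertices equals min{n²·λ(G), (n−1)·(m + 2·e(G)), 2n·δ(G) + 2n − 4}. -/

import Mathlib

/-- The strong product of two simple graphs. -/
def strongProd {α β : Type*} (G : SimpleGraph α) (H : SimpleGraph β) :
    SimpleGraph (α × β) where
  Adj x y := (x.1 = y.1 ∧ H.Adj x.2 y.2) ∨ (x.2 = y.2 ∧ G.Adj x.1 y.1) ∨
    (G.Adj x.1 y.1 ∧ H.Adj x.2 y.2)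
  symm := by
    constructor
    rintro ⟨a₁, a₂⟩ ⟨b₁, b₂⟩ (⟨h1, h2⟩ | ⟨h1, h2⟩ | ⟨h1, h2⟩)
    · exact Or.inl ⟨h1.symm, h2.symm⟩
    · exact Or.inr (Or.inl ⟨h1.symm, h2.symm⟩)
    · exact Or.inr (Or.inr ⟨h1.symm, h2.symm⟩)
  loopless := by
    constructor
    rintro ⟨a₁, a₂⟩ (⟨_, h⟩ | ⟨_, h⟩ | ⟨h, _⟩)
    · exact H.irrefl h
    · exact G.irrefl h
    · exact G.irrefl h

/-- The degree of a vertex. -/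
noncomputable def deg {α : Type*} (G : SimpleGraph α) (v : α) : ℕ := (G.neighborSet v).ncard

/-- The minimum degree `δ(G)`. -/
noncomputable def minDeg {α : Type*} (G : SimpleGraph α) : ℕ := sInf {d | ∃ v, d = deg G v}

/-- The number of edges `e(G)`. -/
noncomputable def numEdges {α : Type*} (G : SimpleGraph α) : ℕ := G.edgeSet.ncard

/-- The minimum edge-degree `ξ(G) = min {d(u) + d(v) - 2 : uv ∈ E(G)}`. -/
noncomputable def minEdgeDeg {α : Type*} (G : SimpleGraph α) : ℕ :=
  sInf {d | ∃ u v, G.Adj u v ∧ d = deg G u + deg G v - 2}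

/-- The edge-connectivity `λ(G)`. -/
noncomputable def edgeConn {α : Type*} (G : SimpleGraph α) : ℕ :=
  sInf {k | ∃ S : Set (Sym2 α), S ⊆ G.edgeSet ∧ S.ncard = k ∧
    ¬ (G.deleteEdges S).Connected}

/-- `S` is a restricted edge-cut of `G`: deleting `S` disconnects `G` and every
component of `G - S` has at least two vertices. -/
def IsRestrictedEdgeCut {α : Type*} (G : SimpleGraph α) (S : Set (Sym2 α)) : Prop :=
  S ⊆ G.edgeSet ∧ ¬ (G.deleteEdges S).Connected ∧
    ∀ v : α, 2 ≤ ((G.deleteEdges S).connectedComponentMk v).supp.ncard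

/-- The restricted edge-connectivity `λ'(G)`. -/
noncomputable def restEdgeConn {α : Type*} (G : SimpleGraph α) : ℕ :=
  sInf {k | ∃ S : Set (Sym2 α), IsRestrictedEdgeCut G S ∧ S.ncard = k}

/-- `G` is super restricted edge-connected: every minimum restricted edge-cut
isolates an edge, i.e. some component of `G - S` has exactly two vertices. -/
def SuperRestrictedEdgeConnected {α : Type*} (G : SimpleGraph α) : Prop :=
  ∀ S : Set (Sym2 α), IsRestrictedEdgeCut G S → S.ncard = restEdgeConn G →
    ∃ v : α, ((G.deleteEdges S).connectedComponentMk v).supp.ncard = 2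

/-- The set `[X, Y]_G` of edges of `G` with one end in `X` and the other in `Y`. -/
def edgesBetween {α : Type*} (G : SimpleGraph α) (X Y : Set α) : Set (Sym2 α) :=
  {e | e ∈ G.edgeSet ∧ ∃ u ∈ X, ∃ v ∈ Y, e = s(u, v)}

/-!
Let `S` be a restricted edge-cut of `G ⊠ K_n`. The vertices reachable from a fixed vertex in
`G ⊠ K_n - S` form a side `X` with `[X, Xᶜ] ⊆ S` in which every vertex has a neighbour on its own
side. If `X` meets the fiber `{x} × K_n` in `a x` vertices, then `[X, Xᶜ]` has
`∑ₓ a x (n - a x) + ∑_{x ~ y} a x (n - a y)` edges. If every fiber is full or empty, the full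
fibers span an edge cut of `G`, each edge of which costs `n²`. A fiber split as `a + (n - a)`
costs `a (n - a)` inside, and each edge of `G` at it costs at least `n`, or `2n` when
`2 ≤ a ≤ n - 2` and the other end is not split; so two split fibers, or a single one with
`2 ≤ a ≤ n - 2`, cost at least `2nδ + 2n - 4`. A single fiber split as `1 + (n - 1)` is weighed
against the cut of `G` around the full fibers. Lifting a minimum edge cut of `G`, and isolating
an edge inside the fiber over a vertex of minimum degree, attain the two bounds; cutting off a
layer `V × {i}`, which costs `(n - 1)(m + 2e(G))`, is never cheaper than the latter since
`2e(G) ≥ mδ` and `δ < m`.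
-/

open SimpleGraph Finset
open scoped Classical

section EdgeCuts

variable {α : Type*} {H : SimpleGraph α}

lemma edgesBetween_subset_edgeSet (X Y : Set α) : edgesBetween H X Y ⊆ H.edgeSet :=
  fun _ he => he.1

lemma SimpleGraph.Reachable.mem_iff_of_forall_adj {K : SimpleGraph α} {X : Set α}
    (hX : ∀ u w, K.Adj u w → (u ∈ X ↔ w ∈ X)) {u w : α} (h : K.Reachable u w) :
    u ∈ X ↔ w ∈ X := by
  obtain ⟨p⟩ := h
  induction p with
  | nil => rfl
  | cons hadj _ ih => exact (hX _ _ hadj).trans ih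

lemma mem_iff_of_adj_deleteEdges_edgesBetween_compl {X : Set α} {u w : α}
    (h : (H.deleteEdges (edgesBetween H X Xᶜ)).Adj u w) : u ∈ X ↔ w ∈ X := by
  rw [deleteEdges_adj] at h
  by_contra hne
  refine h.2 ⟨h.1, ?_⟩
  by_cases hu : u ∈ X
  · exact ⟨u, hu, w, fun hw => hne (iff_of_true hu hw), rfl⟩
  · exact ⟨w, not_not.1 fun hw => hne (iff_of_false hu hw), u, hu, Sym2.eq_swap⟩

lemma two_le_ncard_supp_of_adj [Finite α] {u w : α} (h : H.Adj u w) :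
    2 ≤ (H.connectedComponentMk u).supp.ncard :=
  (Set.one_lt_ncard_iff (Set.toFinite _)).2
    ⟨u, w, rfl, ConnectedComponent.sound h.symm.reachable, h.ne⟩

lemma exists_adj_of_two_le_ncard_supp [Finite α] {u : α}
    (h : 2 ≤ (H.connectedComponentMk u).supp.ncard) : ∃ w, H.Adj u w := by
  obtain ⟨w, hw, hwu⟩ := (Set.one_lt_ncard_iff_nontrivial.1 h).exists_ne u
  obtain ⟨p⟩ := (ConnectedComponent.exact hw).symm
  cases p with
  | nil => exact absurd rfl hwu
  | cons hadj _ => exact ⟨_, hadj⟩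

lemma not_connected_deleteEdges_edgesBetween_compl {X : Set α} (hX : X.Nonempty)
    (hXc : Xᶜ.Nonempty) : ¬ (H.deleteEdges (edgesBetween H X Xᶜ)).Connected := fun hc => by
  obtain ⟨u, hu⟩ := hX
  obtain ⟨w, hw⟩ := hXc
  exact hw ((Reachable.mem_iff_of_forall_adj
    (fun _ _ => mem_iff_of_adj_deleteEdges_edgesBetween_compl) (hc.preconnected u w)).1 hu)

lemma isRestrictedEdgeCut_edgesBetween_compl [Finite α] {X : Set α} (hX : X.Nonempty)
    (hXc : Xᶜ.Nonempty) (hside : ∀ u, ∃ w, H.Adj u w ∧ (u ∈ X ↔ w ∈ X)) :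
    IsRestrictedEdgeCut H (edgesBetween H X Xᶜ) := by
  refine ⟨edgesBetween_subset_edgeSet X Xᶜ, not_connected_deleteEdges_edgesBetween_compl hX hXc,
    fun u => ?_⟩
  obtain ⟨w, hadj, hmem⟩ := hside u
  refine two_le_ncard_supp_of_adj (w := w) (deleteEdges_adj.2 ⟨hadj, fun he => ?_⟩)
  obtain ⟨-, x, hx, y, hy, hxy⟩ := he
  rcases Sym2.eq_iff.1 hxy with ⟨rfl, rfl⟩ | ⟨rfl, rfl⟩
  · exact hy (hmem.1 hx)
  · exact hy (hmem.2 hx)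

lemma exists_edgesBetween_compl_subset [Nonempty α] {S : Set (Sym2 α)}
    (hS : ¬ (H.deleteEdges S).Connected) :
    ∃ X : Set α, X.Nonempty ∧ Xᶜ.Nonempty ∧ edgesBetween H X Xᶜ ⊆ S ∧
      ∀ u w, (H.deleteEdges S).Adj u w → (u ∈ X ↔ w ∈ X) := by
  have hpre : ¬ (H.deleteEdges S).Preconnected := fun h => hS ⟨h⟩
  simp only [Preconnected, not_forall] at hpre
  obtain ⟨u, v, huv⟩ := hpre
  refine ⟨{w | (H.deleteEdges S).Reachable u w}, ⟨u, Reachable.refl u⟩, ⟨v, huv⟩, ?_,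
    fun w w' hadj => ⟨fun hw => hw.trans hadj.reachable, fun hw' => hw'.trans hadj.symm.reachable⟩⟩
  rintro e ⟨he, w, hw, w', hw', rfl⟩
  by_contra heS
  exact hw' (hw.trans (deleteEdges_adj.2 ⟨he, heS⟩).reachable)

lemma edgeConn_le_ncard_edgesBetween_compl {X : Set α} (hX : X.Nonempty) (hXc : Xᶜ.Nonempty) :
    edgeConn H ≤ (edgesBetween H X Xᶜ).ncard :=
  Nat.sInf_le ⟨_, edgesBetween_subset_edgeSet X Xᶜ, rfl,
    not_connected_deleteEdges_edgesBetween_compl hX hXc⟩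

lemma exists_ncard_eq_edgeConn [Fintype α] (h : 2 ≤ Fintype.card α) :
    ∃ F : Set (Sym2 α), F ⊆ H.edgeSet ∧ F.ncard = edgeConn H ∧ ¬ (H.deleteEdges F).Connected := by
  obtain ⟨u, w, huw⟩ := Fintype.exists_pair_of_one_lt_card h
  have hX : ({u} : Set α)ᶜ.Nonempty := ⟨w, huw.symm⟩
  exact Nat.sInf_mem (s := {k | ∃ S : Set (Sym2 α), S ⊆ H.edgeSet ∧ S.ncard = k ∧
    ¬ (H.deleteEdges S).Connected}) ⟨_, _, edgesBetween_subset_edgeSet _ _, rfl,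
    not_connected_deleteEdges_edgesBetween_compl (Set.singleton_nonempty u) hX⟩

lemma restEdgeConn_le_ncard {S : Set (Sym2 α)} (hS : IsRestrictedEdgeCut H S) :
    restEdgeConn H ≤ S.ncard :=
  Nat.sInf_le ⟨S, hS, rfl⟩

lemma le_restEdgeConn {S : Set (Sym2 α)} (hS : IsRestrictedEdgeCut H S) {k : ℕ}
    (hk : ∀ S, IsRestrictedEdgeCut H S → k ≤ S.ncard) : k ≤ restEdgeConn H :=
  le_csInf ⟨_, S, hS, rfl⟩ (by rintro _ ⟨S, hS, rfl⟩; exact hk S hS)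

lemma minDeg_le_deg (v : α) : minDeg H ≤ deg H v :=
  Nat.sInf_le ⟨v, rfl⟩

lemma exists_deg_eq_minDeg [Nonempty α] : ∃ v, deg H v = minDeg H :=
  (Nat.sInf_mem (s := {d | ∃ v, d = deg H v}) ⟨_, Classical.arbitrary α, rfl⟩).imp
    fun _ h => h.symm

section Fintype

variable [Fintype α]

lemma deg_eq_degree (v : α) : deg H v = H.degree v := by
  rw [deg, ← card_neighborFinset_eq_degree, neighborFinset, Set.ncard_eq_toFinset_card']

lemma numEdges_eq_card_edgeFinset : numEdges H = #H.edgeFinset := by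
  rw [numEdges, edgeFinset, Set.ncard_eq_toFinset_card']

lemma sum_sum_neighborFinset_comm {M : Type*} [AddCommMonoid M] (φ : α → α → M) :
    ∑ x, ∑ y ∈ H.neighborFinset x, φ x y = ∑ x, ∑ y ∈ H.neighborFinset x, φ y x := by
  simp only [neighborFinset_eq_filter, Finset.sum_filter]
  rw [Finset.sum_comm]
  simp only [H.adj_comm]

lemma ncard_edgesBetween_compl (X : Set α) :
    (edgesBetween H X Xᶜ).ncard =
      ∑ u, ∑ w ∈ H.neighborFinset u, if u ∈ X ∧ w ∉ X then 1 else 0 := by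
  set T := ({p | H.Adj p.1 p.2 ∧ p.1 ∈ X ∧ p.2 ∉ X} : Finset (α × α))
  have hT : edgesBetween H X Xᶜ = ↑(T.image fun p => s(p.1, p.2)) := by
    ext e
    simp only [coe_image, Set.mem_image, mem_coe, mem_filter, mem_univ, true_and, T]
    constructor
    · rintro ⟨he, u, hu, w, hw, rfl⟩
      exact ⟨(u, w), ⟨he, hu, hw⟩, rfl⟩
    · rintro ⟨⟨u, w⟩, ⟨hadj, hu, hw⟩, rfl⟩
      exact ⟨hadj, u, hu, w, hw, rfl⟩
  have hinj : Set.InjOn (fun p : α × α => s(p.1, p.2)) T := by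
    rintro ⟨u, w⟩ hp ⟨u', w'⟩ hq he
    simp only [mem_coe, mem_filter, mem_univ, true_and, T] at hp hq
    rcases Sym2.eq_iff.1 he with ⟨rfl, rfl⟩ | ⟨rfl, rfl⟩
    · rfl
    · exact absurd hp.2.1 hq.2.2
  rw [hT, Set.ncard_coe_finset, card_image_of_injOn hinj, card_filter, Fintype.sum_prod_type]
  simp only [neighborFinset_eq_filter, Finset.sum_filter, ite_and]

lemma sum_sum_neighborFinset_ite_eq (x₀ : α) (φ : α → ℕ) :
    ∑ x, ∑ y ∈ H.neighborFinset x, (if x = x₀ then φ y else 0) =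
      ∑ y ∈ H.neighborFinset x₀, φ y := by
  simp only [sum_ite_irrel, sum_const_zero, sum_ite_eq', mem_univ, if_true]

lemma sum_sum_neighborFinset_ite_mem (F : Finset α) (c : ℕ) :
    ∑ x, ∑ _y ∈ H.neighborFinset x, (if x ∈ F then c else 0) = c * ∑ x ∈ F, H.degree x := by
  simp only [sum_const, card_neighborFinset_eq_degree, smul_eq_mul, mul_ite, mul_zero,
    sum_ite_mem, univ_inter, mul_comm c, sum_mul]

lemma two_mul_mul_sum_degree_le (F : Finset α) (c : ℕ) {φ ψ : α → α → ℕ}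
    (h : ∀ x, ∀ y ∈ H.neighborFinset x,
      (if x ∈ F then c else 0) + (if y ∈ F then c else 0) ≤ φ x y + φ y x + ψ x y) :
    2 * (c * ∑ x ∈ F, H.degree x) ≤
      2 * ∑ x, ∑ y ∈ H.neighborFinset x, φ x y + ∑ x, ∑ y ∈ H.neighborFinset x, ψ x y := by
  have hsum := sum_le_sum (s := univ) fun x _ => sum_le_sum (h x)
  simp only [sum_add_distrib] at hsum
  rw [← sum_sum_neighborFinset_comm (fun x y => if x ∈ F then c else 0),
    ← sum_sum_neighborFinset_comm φ, sum_sum_neighborFinset_ite_mem] at hsum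
  omega

lemma sum_sum_neighborFinset_ite_mem_and_mem_le (F : Finset α) :
    ∑ x, ∑ y ∈ H.neighborFinset x, (if x ∈ F ∧ y ∈ F then 1 else 0) ≤ #F * (#F - 1) := by
  calc ∑ x, ∑ y ∈ H.neighborFinset x, (if x ∈ F ∧ y ∈ F then 1 else 0)
      ≤ ∑ x, if x ∈ F then #F - 1 else 0 := by
        refine sum_le_sum fun x _ => ?_
        split_ifs with hx
        · rw [← card_erase_of_mem hx]
          simp only [hx, true_and, sum_boole, Nat.cast_id]
          refine card_le_card fun y hy => ?_
          obtain ⟨hyx, hyF⟩ := mem_filter.1 hy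
          exact mem_erase.2 ⟨((mem_neighborFinset _ _ _).1 hyx).ne', hyF⟩
        · simp [hx]
    _ = #F * (#F - 1) := by rw [sum_ite_mem, univ_inter, sum_const, smul_eq_mul]

end Fintype

end EdgeCuts

section StrongProduct

variable {V : Type*} {n : ℕ} {G : SimpleGraph V}

lemma strongProd_completeGraph_adj {u w : V × Fin n} :
    (strongProd G (completeGraph (Fin n))).Adj u w ↔
      (u.1 = w.1 ∧ u.2 ≠ w.2) ∨ G.Adj u.1 w.1 := by
  change (_ ∧ _ ≠ _) ∨ _ ∨ (_ ∧ _ ≠ _) ↔ _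
  by_cases h : u.2 = w.2 <;> tauto

noncomputable def fiberCard (X : Set (V × Fin n)) (x : V) : ℕ := #{i | (x, i) ∈ X}

lemma fiberCard_le (X : Set (V × Fin n)) (x : V) : fiberCard X x ≤ n :=
  (card_filter_le _ _).trans (card_fin n).le

lemma card_filter_not_mem_fiber (X : Set (V × Fin n)) (x : V) :
    #{i | (x, i) ∉ X} = n - fiberCard X x := by
  have := card_filter_add_card_filter_not (s := univ) (fun i => (x, i) ∈ X)
  rw [card_univ, Fintype.card_fin] at this
  rw [fiberCard]
  omega

lemma fiberCard_compl (X : Set (V × Fin n)) (x : V) : fiberCard Xᶜ x = n - fiberCard X x := by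
  rw [← card_filter_not_mem_fiber, fiberCard]
  simp only [Set.mem_compl_iff]

lemma fiberCard_pos {X : Set (V × Fin n)} {x : V} {i : Fin n} (h : (x, i) ∈ X) :
    0 < fiberCard X x :=
  card_pos.2 ⟨i, mem_filter.2 ⟨mem_univ i, h⟩⟩

lemma sum_crossing_pairs_fibers_strongProd (X : Set (V × Fin n)) (x y : V) :
    (∑ i, ∑ j, if (strongProd G (completeGraph (Fin n))).Adj (x, i) (y, j) then
        (if (x, i) ∈ X ∧ (y, j) ∉ X then 1 else 0) else 0) =
      if x = y ∨ G.Adj x y then fiberCard X x * (n - fiberCard X y) else 0 := by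
  split_ifs with hxy
  · have h : ∀ i j, (if (strongProd G (completeGraph (Fin n))).Adj (x, i) (y, j) then
        (if (x, i) ∈ X ∧ (y, j) ∉ X then 1 else 0) else 0) =
          (if (x, i) ∈ X then 1 else 0) * (if (y, j) ∉ X then 1 else 0) := by
      intro i j
      by_cases hi : (x, i) ∈ X
      · by_cases hj : (y, j) ∉ X
        · have hadj : (strongProd G (completeGraph (Fin n))).Adj (x, i) (y, j) := by
            refine strongProd_completeGraph_adj.2 (hxy.imp (fun h => ⟨h, ?_⟩) id)
            rintro rfl
            subst h
            exact hj hi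
          simp [hadj, hi, hj]
        · simp [hj]
      · simp [hi]
    simp only [h, ← sum_mul_sum, sum_boole, Nat.cast_id, card_filter_not_mem_fiber]
    rfl
  · refine sum_eq_zero fun i _ => sum_eq_zero fun j _ => if_neg fun hadj => hxy ?_
    exact (strongProd_completeGraph_adj.1 hadj).imp And.left id

lemma exists_mem_of_fiberCard_pos {X : Set (V × Fin n)} {x : V} (h : 0 < fiberCard X x) :
    ∃ i, (x, i) ∈ X := by
  obtain ⟨i, hi⟩ := card_pos.1 h
  exact ⟨i, (mem_filter.1 hi).2⟩

lemma exists_adj_mem_of_two_le_fiberCard {X : Set (V × Fin n)} {u : V × Fin n}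
    (h : 2 ≤ fiberCard X u.1) :
    ∃ w, (strongProd G (completeGraph (Fin n))).Adj u w ∧ w ∈ X := by
  obtain ⟨j, hj, hju⟩ := exists_mem_ne h u.2
  exact ⟨(u.1, j), strongProd_completeGraph_adj.2 (Or.inl ⟨rfl, hju.symm⟩), (mem_filter.1 hj).2⟩

lemma exists_adj_fiberCard_pos {X : Set (V × Fin n)}
    (hside : ∀ u, ∃ w, (strongProd G (completeGraph (Fin n))).Adj u w ∧ (u ∈ X ↔ w ∈ X))
    {x : V} (hx : fiberCard X x = 1) : ∃ y, G.Adj x y ∧ 0 < fiberCard X y := by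
  obtain ⟨i, hi⟩ := card_eq_one.1 hx
  have hiX : (x, i) ∈ X := (mem_filter.1 (hi ▸ mem_singleton_self i :
    i ∈ ({i | (x, i) ∈ X} : Finset (Fin n)))).2
  obtain ⟨⟨y, j⟩, hadj, hmem⟩ := hside (x, i)
  rcases strongProd_completeGraph_adj.1 hadj with ⟨rfl, hij⟩ | hG
  · have hj : j ∈ ({i} : Finset (Fin n)) := hi ▸ mem_filter.2 ⟨mem_univ j, hmem.1 hiX⟩
    exact absurd (mem_singleton.1 hj).symm hij
  · exact ⟨y, hG, fiberCard_pos (hmem.1 hiX)⟩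

variable [Fintype V]

noncomputable def cutWeight (G : SimpleGraph V) (n : ℕ) (a : V → ℕ) : ℕ :=
  ∑ x, a x * (n - a x) + ∑ x, ∑ y ∈ G.neighborFinset x, a x * (n - a y)

lemma sum_ite_eq_or_adj (φ : V → ℕ) (x : V) :
    ∑ y, (if x = y ∨ G.Adj x y then φ y else 0) = φ x + ∑ y ∈ G.neighborFinset x, φ y := by
  have h : ∀ y, (if x = y ∨ G.Adj x y then φ y else 0) =
      (if x = y then φ y else 0) + (if G.Adj x y then φ y else 0) := by
    intro y
    by_cases hxy : x = y
    · subst hxy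
      simp
    · simp [hxy]
  simp only [h, sum_add_distrib, sum_ite_eq, mem_univ, if_true, neighborFinset_eq_filter,
    sum_filter]

lemma ncard_edgesBetween_compl_strongProd (X : Set (V × Fin n)) :
    (edgesBetween (strongProd G (completeGraph (Fin n))) X Xᶜ).ncard =
      cutWeight G n (fiberCard X) := by
  rw [ncard_edgesBetween_compl]
  simp only [neighborFinset_eq_filter (G := strongProd _ _), sum_filter, Fintype.sum_prod_type]
  rw [cutWeight, ← sum_add_distrib]
  refine sum_congr rfl fun x _ => ?_
  rw [sum_comm]
  simp only [sum_crossing_pairs_fibers_strongProd, sum_ite_eq_or_adj]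

end StrongProduct

lemma n_le_mul_sub_add_mul_sub {n a b : ℕ} (ha : 0 < a) (han : a < n) (hb : b ≤ n) :
    n ≤ a * (n - b) + b * (n - a) := by
  obtain ⟨c, rfl⟩ := Nat.exists_eq_add_of_lt han
  obtain ⟨d, hd⟩ := Nat.exists_eq_add_of_le hb
  rw [hd, Nat.add_sub_cancel_left, ← hd, show a + c + 1 - a = c + 1 by omega]
  nlinarith

lemma two_mul_sub_two_le_mul_sub_add_mul_sub {n a b : ℕ} (ha : 0 < a) (han : a < n)
    (hb : 0 < b) (hbn : b < n) : 2 * n - 2 ≤ a * (n - b) + b * (n - a) := by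
  obtain ⟨c, rfl⟩ := Nat.exists_eq_add_of_lt han
  obtain ⟨d, hd⟩ := Nat.exists_eq_add_of_lt hbn
  rw [hd, show b + d + 1 - b = d + 1 by omega, ← hd, show a + c + 1 - a = c + 1 by omega,
    Nat.sub_le_iff_le_add]
  nlinarith

lemma sub_one_le_mul_sub {n a : ℕ} (ha : 0 < a) (han : a < n) : n - 1 ≤ a * (n - a) := by
  obtain ⟨c, rfl⟩ := Nat.exists_eq_add_of_lt han
  rw [show a + c + 1 - a = c + 1 by omega, Nat.sub_le_iff_le_add]
  nlinarith

lemma two_mul_sub_four_le_mul_sub {n a : ℕ} (ha : 2 ≤ a) (han : a + 2 ≤ n) :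
    2 * n - 4 ≤ a * (n - a) := by
  obtain ⟨c, rfl⟩ := Nat.exists_eq_add_of_le han
  rw [show a + 2 + c - a = c + 2 by omega, Nat.sub_le_iff_le_add]
  nlinarith

lemma min_le_sub_one_add_of_le_add {n p q c l d : ℕ} (hn : 4 ≤ n) (hp : 1 ≤ p) (hd : d ≤ p + q)
    (hl : l ≤ c + p) :
    min (n ^ 2 * l) (2 * n * d + 2 * n - 4) ≤ n - 1 + (n ^ 2 * c + n * q + n * (n - 1) * p) := by
  obtain ⟨k, rfl⟩ : ∃ k, n = k + 4 := ⟨n - 4, by omega⟩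
  simp only [show k + 4 - 1 = k + 3 by omega]
  rcases le_or_gt p q with hpq | hqp
  · refine (min_le_left _ _).trans ?_
    nlinarith [Nat.mul_le_mul_left ((k + 4) ^ 2) hl]
  · refine (min_le_right _ _).trans ?_
    obtain ⟨r, rfl⟩ := Nat.exists_eq_add_of_lt hqp
    have := Nat.mul_le_mul_left (2 * (k + 4)) hd
    rw [Nat.sub_le_iff_le_add]
    nlinarith [Nat.zero_le (k * q), Nat.zero_le (k * r), Nat.zero_le (k * k * r),
      Nat.zero_le ((k + 4) ^ 2 * c)]

lemma two_mul_mul_add_le_sub_one_mul {n m d e : ℕ} (hn : 2 ≤ n) (hm : 2 ≤ m) (hdm : d + 1 ≤ m)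
    (he : m * d ≤ 2 * e) : 2 * n * d + 2 * n - 4 ≤ (n - 1) * (m + 2 * e) := by
  obtain ⟨k, rfl⟩ : ∃ k, n = k + 2 := ⟨n - 2, by omega⟩
  have h1 : (k + 1) * (m * (d + 1)) ≤ (k + 1) * (m + 2 * e) := Nat.mul_le_mul_left _ (by linarith)
  rw [show k + 2 - 1 = k + 1 by omega, Nat.sub_le_iff_le_add]
  rcases (show m = 2 ∨ m = 3 ∨ 4 ≤ m by omega) with rfl | rfl | h
  · nlinarith
  · nlinarith
  · nlinarith [Nat.mul_le_mul_left ((k + 1) * (d + 1)) h]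

section CutWeight

variable {V : Type*} [Fintype V] {G : SimpleGraph V} {n : ℕ} {a : V → ℕ}

lemma cutWeight_sub (ha : ∀ x, a x ≤ n) :
    cutWeight G n (fun x => n - a x) = cutWeight G n a := by
  simp only [cutWeight, Nat.sub_sub_self (ha _)]
  rw [sum_sum_neighborFinset_comm]
  simp only [mul_comm]

lemma sq_mul_edgeConn_le_cutWeight (hunsplit : ∀ x, a x = 0 ∨ a x = n) (hpos : ∃ x, 0 < a x)
    (hlt : ∃ x, a x < n) : n ^ 2 * edgeConn G ≤ cutWeight G n a := by
  -- an opaque `A`, so that `x ∈ A` is decided classically, as in `ncard_edgesBetween_compl`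
  obtain ⟨A, hA⟩ : ∃ A : Set V, ∀ x, x ∈ A ↔ a x = n := ⟨{x | a x = n}, fun _ => Iff.rfl⟩
  obtain ⟨x₀, hx₀⟩ := hpos
  obtain ⟨x₁, hx₁⟩ := hlt
  have hAne : A.Nonempty := ⟨x₀, (hA x₀).2 ((hunsplit x₀).resolve_left hx₀.ne')⟩
  have hAc : Aᶜ.Nonempty := ⟨x₁, fun h => hx₁.ne ((hA x₁).1 h)⟩
  calc n ^ 2 * edgeConn G ≤ n ^ 2 * (edgesBetween G A Aᶜ).ncard :=
        Nat.mul_le_mul_left _ (edgeConn_le_ncard_edgesBetween_compl hAne hAc)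
    _ = ∑ x, ∑ y ∈ G.neighborFinset x, n ^ 2 * (if x ∈ A ∧ y ∉ A then 1 else 0) := by
        simp only [ncard_edgesBetween_compl, mul_sum]
    _ ≤ ∑ x, ∑ y ∈ G.neighborFinset x, a x * (n - a y) := by
        refine sum_le_sum fun x _ => sum_le_sum fun y _ => ?_
        split_ifs with h
        · rw [(hA x).1 h.1, (hunsplit y).resolve_right (mt (hA y).2 h.2), Nat.sub_zero, sq, mul_one]
        · exact Nat.zero_le _
    _ ≤ cutWeight G n a := Nat.le_add_left _ _

lemma le_cutWeight_of_two_split_fibers (ha : ∀ x, a x ≤ n) {x₀ x₁ : V} (hne : x₀ ≠ x₁)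
    (h₀ : 0 < a x₀) (h₀' : a x₀ < n) (h₁ : 0 < a x₁) (h₁' : a x₁ < n) :
    2 * n * minDeg G + 2 * n - 4 ≤ cutWeight G n a := by
  set F : Finset V := {x₀, x₁}
  have hF : ∀ x ∈ F, 0 < a x ∧ a x < n := by
    simp only [F, mem_insert, mem_singleton, forall_eq_or_imp, forall_eq]
    exact ⟨⟨h₀, h₀'⟩, h₁, h₁'⟩
  have hvert : 2 * (n - 1) ≤ ∑ x, a x * (n - a x) :=
    calc 2 * (n - 1) ≤ a x₀ * (n - a x₀) + a x₁ * (n - a x₁) := by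
          have := sub_one_le_mul_sub h₀ h₀'
          have := sub_one_le_mul_sub h₁ h₁'
          omega
      _ = ∑ x ∈ F, a x * (n - a x) := (sum_pair (f := fun x => a x * (n - a x)) hne).symm
      _ ≤ ∑ x, a x * (n - a x) := sum_le_sum_of_subset (subset_univ F)
  have hedge := two_mul_mul_sum_degree_le (H := G) F n (φ := fun x y => a x * (n - a y))
    (ψ := fun x y => (if x ∈ F ∧ y ∈ F then 1 else 0) + (if x ∈ F ∧ y ∈ F then 1 else 0))
    fun x y _ => by
      by_cases hx : x ∈ F <;> by_cases hy : y ∈ F <;>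
        simp only [hx, hy, if_true, if_false, and_true, and_false]
      · have := two_mul_sub_two_le_mul_sub_add_mul_sub (hF x hx).1 (hF x hx).2 (hF y hy).1
          (hF y hy).2
        omega
      · have := n_le_mul_sub_add_mul_sub (hF x hx).1 (hF x hx).2 (ha y)
        omega
      · have := n_le_mul_sub_add_mul_sub (hF y hy).1 (hF y hy).2 (ha x)
        omega
      · omega
  simp only [sum_add_distrib] at hedge
  rw [sum_pair hne] at hedge
  have hcorr := sum_sum_neighborFinset_ite_mem_and_mem_le (H := G) F
  rw [card_pair hne] at hcorr
  have hδ₀ := minDeg_le_deg (H := G) x₀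
  have hδ₁ := minDeg_le_deg (H := G) x₁
  rw [deg_eq_degree] at hδ₀ hδ₁
  have := Nat.mul_le_mul_left n (Nat.add_le_add hδ₀ hδ₁)
  have : 2 * n * minDeg G = n * (minDeg G + minDeg G) := by ring
  rw [cutWeight]
  omega

lemma le_cutWeight_of_unique_split_fiber {x₀ : V} (h₀ : 2 ≤ a x₀) (h₀' : a x₀ + 2 ≤ n)
    (hunsplit : ∀ x ≠ x₀, a x = 0 ∨ a x = n) :
    2 * n * minDeg G + 2 * n - 4 ≤ cutWeight G n a := by
  have hvert : 2 * n - 4 ≤ ∑ x, a x * (n - a x) :=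
    (two_mul_sub_four_le_mul_sub h₀ h₀').trans
      (single_le_sum (f := fun x => a x * (n - a x)) (fun _ _ => Nat.zero_le _) (mem_univ x₀))
  have hstar : ∀ y ≠ x₀, 2 * n ≤ a x₀ * (n - a y) + a y * (n - a x₀) := by
    intro y hy
    rcases hunsplit y hy with h | h <;> rw [h]
    · simpa using Nat.mul_le_mul_right n h₀
    · simpa [mul_comm] using Nat.mul_le_mul_left n (show 2 ≤ n - a x₀ by omega)
  have hedge := two_mul_mul_sum_degree_le (H := G) {x₀} (2 * n)
    (φ := fun x y => a x * (n - a y)) (ψ := fun _ _ => 0) fun x y hy => by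
      have hxy := ((mem_neighborFinset _ _ _).1 hy).ne
      simp only [mem_singleton, add_zero]
      by_cases hx : x = x₀
      · subst hx
        simpa [hxy.symm] using hstar y hxy.symm
      · by_cases hy' : y = x₀
        · subst hy'
          simpa [hx, add_comm] using hstar x hx
        · simp [hx, hy']
  simp only [sum_const_zero, add_zero, sum_singleton] at hedge
  have hδ := minDeg_le_deg (H := G) x₀
  rw [deg_eq_degree] at hδ
  have := Nat.mul_le_mul_left (2 * n) hδ
  rw [cutWeight]
  omega

section PartitionAroundVertex

variable {A Z : Set V} {x₀ : V}

lemma ncard_edgesBetween_compl_eq_add (hAc : ∀ x, x ∉ A ↔ x ∈ Z ∨ x = x₀) (hx₀ : x₀ ∉ Z) :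
    (edgesBetween G A Aᶜ).ncard = ∑ x, ∑ y ∈ G.neighborFinset x,
      (if x ∈ A ∧ y ∈ Z then 1 else 0) + ∑ y ∈ G.neighborFinset x₀, if y ∈ A then 1 else 0 := by
  have hx₀A : x₀ ∉ A := (hAc x₀).2 (Or.inr rfl)
  rw [ncard_edgesBetween_compl, ← sum_sum_neighborFinset_ite_eq x₀,
    sum_sum_neighborFinset_comm (fun x y => if x = x₀ then (if y ∈ A then 1 else 0) else 0),
    ← sum_add_distrib]
  refine sum_congr rfl fun x _ => ?_
  rw [← sum_add_distrib]
  refine sum_congr rfl fun y _ => ?_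
  by_cases hy : y = x₀
  · subst hy
    simp [hx₀A, hx₀]
  · simp only [hAc y, hy, or_false, if_false, add_zero]

lemma le_sum_sum_neighborFinset_mul_sub (hA : ∀ x, x ∈ A ↔ a x = n) (hZ : ∀ x, x ∈ Z ↔ a x = 0)
    (h₀ : a x₀ = 1) (hx₀A : x₀ ∉ A) (hx₀Z : x₀ ∉ Z) :
    n ^ 2 * ∑ x, ∑ y ∈ G.neighborFinset x, (if x ∈ A ∧ y ∈ Z then 1 else 0) +
      n * ∑ y ∈ G.neighborFinset x₀, (if y ∈ Z then 1 else 0) +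
      n * (n - 1) * ∑ y ∈ G.neighborFinset x₀, (if y ∈ A then 1 else 0) ≤
      ∑ x, ∑ y ∈ G.neighborFinset x, a x * (n - a y) := by
  rw [← sum_sum_neighborFinset_ite_eq x₀, ← sum_sum_neighborFinset_ite_eq x₀,
    sum_sum_neighborFinset_comm (fun x y => if x = x₀ then (if y ∈ A then 1 else 0) else 0)]
  simp only [mul_sum, ← sum_add_distrib]
  refine sum_le_sum fun x _ => sum_le_sum fun y hy => ?_
  have hxy := ((mem_neighborFinset _ _ _).1 hy).ne
  by_cases hx : x = x₀
  · subst hx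
    by_cases hyZ : y ∈ Z <;> simp [hx₀A, hxy.symm, h₀, hyZ, (hZ y).1]
  · by_cases hy' : y = x₀
    · subst hy'
      by_cases hxA : x ∈ A <;> simp [hx, hx₀Z, h₀, hxA, (hA x).1]
    · by_cases hxy' : x ∈ A ∧ y ∈ Z
      · simp [hx, hy', hxy', (hA x).1 hxy'.1, (hZ y).1 hxy'.2, sq]
      · simp [hx, hy', hxy']

end PartitionAroundVertex

/-- With `A` the full fibers and `Z` the empty ones, `λ(G) ≤ |[A, Aᶜ]|` wins when `x₀` has at
most as many neighbours in `A` as in `Z`, and `2 n δ(G) + 2 n - 4` wins otherwise. -/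
lemma min_le_cutWeight_of_unique_split_fiber_eq_one (hn : 4 ≤ n) {x₀ : V} (h₀ : a x₀ = 1)
    (hunsplit : ∀ x ≠ x₀, a x = 0 ∨ a x = n) (hnb : ∃ y, G.Adj x₀ y ∧ 0 < a y) :
    min (n ^ 2 * edgeConn G) (2 * n * minDeg G + 2 * n - 4) ≤ cutWeight G n a := by
  obtain ⟨A, hA⟩ : ∃ A : Set V, ∀ x, x ∈ A ↔ a x = n := ⟨{x | a x = n}, fun _ => Iff.rfl⟩
  obtain ⟨Z, hZ⟩ : ∃ Z : Set V, ∀ x, x ∈ Z ↔ a x = 0 := ⟨{x | a x = 0}, fun _ => Iff.rfl⟩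
  have hx₀A : x₀ ∉ A := fun h => by have := (hA x₀).1 h; omega
  have hx₀Z : x₀ ∉ Z := fun h => by have := (hZ x₀).1 h; omega
  have hAc : ∀ x, x ∉ A ↔ x ∈ Z ∨ x = x₀ := fun x => by
    by_cases hx : x = x₀
    · simp [hx, hx₀A]
    · rw [hA, hZ]; rcases hunsplit x hx with h | h <;> simp [hx, h] <;> omega
  obtain ⟨y, hadj, hy⟩ := hnb
  have hyA : y ∈ A := (hA y).2 ((hunsplit y hadj.ne').resolve_left hy.ne')
  have hp : 1 ≤ ∑ y ∈ G.neighborFinset x₀, if y ∈ A then 1 else 0 :=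
    (if_pos hyA).symm.le.trans (single_le_sum (f := fun y => if y ∈ A then 1 else 0)
      (fun _ _ => Nat.zero_le _) ((mem_neighborFinset _ _ _).2 hadj))
  have hdeg : G.degree x₀ = ∑ y ∈ G.neighborFinset x₀, (if y ∈ A then 1 else 0) +
      ∑ y ∈ G.neighborFinset x₀, (if y ∈ Z then 1 else 0) := by
    rw [← card_neighborFinset_eq_degree, card_eq_sum_ones, ← sum_add_distrib]
    refine sum_congr rfl fun y hy => ?_
    have := hAc y
    have := ((mem_neighborFinset _ _ _).1 hy).ne'
    split_ifs <;> tauto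
  have hδ := minDeg_le_deg (H := G) x₀
  rw [deg_eq_degree, hdeg] at hδ
  have hconn := (edgeConn_le_ncard_edgesBetween_compl (H := G) ⟨y, hyA⟩ ⟨x₀, hx₀A⟩).trans_eq
    (ncard_edgesBetween_compl_eq_add hAc hx₀Z)
  have hvert : n - 1 ≤ ∑ x, a x * (n - a x) := by
    simpa [h₀] using single_le_sum (f := fun x => a x * (n - a x)) (fun _ _ => Nat.zero_le _)
      (mem_univ x₀)
  exact (min_le_sub_one_add_of_le_add hn hp hδ hconn).trans (Nat.add_le_add hvert
    (le_sum_sum_neighborFinset_mul_sub hA hZ h₀ hx₀A hx₀Z))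

theorem min_le_cutWeight (hn : 4 ≤ n) (ha : ∀ x, a x ≤ n) (hpos : ∃ x, 0 < a x)
    (hlt : ∃ x, a x < n) (h₁ : ∀ x, a x = 1 → ∃ y, G.Adj x y ∧ 0 < a y)
    (h₂ : ∀ x, a x = n - 1 → ∃ y, G.Adj x y ∧ a y < n) :
    min (n ^ 2 * edgeConn G) (2 * n * minDeg G + 2 * n - 4) ≤ cutWeight G n a := by
  by_cases hunsplit : ∀ x, a x = 0 ∨ a x = n
  · exact (min_le_left _ _).trans (sq_mul_edgeConn_le_cutWeight hunsplit hpos hlt)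
  simp only [not_forall, not_or] at hunsplit
  obtain ⟨x₀, hx₀, hx₀'⟩ := hunsplit
  have h₀ : 0 < a x₀ := Nat.pos_of_ne_zero hx₀
  have h₀' : a x₀ < n := lt_of_le_of_ne (ha x₀) hx₀'
  by_cases hsecond : ∃ x₁ ≠ x₀, a x₁ ≠ 0 ∧ a x₁ ≠ n
  · obtain ⟨x₁, hne, h, h'⟩ := hsecond
    exact (min_le_right _ _).trans (le_cutWeight_of_two_split_fibers ha hne.symm h₀ h₀'
      (Nat.pos_of_ne_zero h) (lt_of_le_of_ne (ha x₁) h'))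
  have hrest : ∀ x ≠ x₀, a x = 0 ∨ a x = n := fun x hx =>
    by_contra fun h => hsecond ⟨x, hx, not_or.1 h⟩
  rcases (show a x₀ = 1 ∨ a x₀ = n - 1 ∨ (2 ≤ a x₀ ∧ a x₀ + 2 ≤ n) by omega) with h | h | h
  · exact min_le_cutWeight_of_unique_split_fiber_eq_one hn h hrest (h₁ x₀ h)
  · -- the split `(n - 1) + 1` is the split `1 + (n - 1)` of the complementary side
    rw [← cutWeight_sub ha]
    refine min_le_cutWeight_of_unique_split_fiber_eq_one hn (show n - a x₀ = 1 by omega)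
      (fun x hx => ?_) ?_
    · rcases hrest x hx with h' | h' <;> simp [h']
    · obtain ⟨y, hadj, hy⟩ := h₂ x₀ h
      exact ⟨y, hadj, Nat.sub_pos_of_lt hy⟩
  · exact (min_le_right _ _).trans (le_cutWeight_of_unique_split_fiber h.1 h.2 hrest)

end CutWeight

section Cuts

variable {V : Type*} [Fintype V] {G : SimpleGraph V} {n : ℕ}

lemma isRestrictedEdgeCut_edgesBetween_compl_strongProd {X : Set (V × Fin n)}
    (hX : X.Nonempty) (hXc : Xᶜ.Nonempty) (h₁ : ∀ u ∈ X, 2 ≤ fiberCard X u.1)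
    (h₂ : ∀ u ∉ X, 2 ≤ fiberCard Xᶜ u.1) :
    IsRestrictedEdgeCut (strongProd G (completeGraph (Fin n)))
      (edgesBetween (strongProd G (completeGraph (Fin n))) X Xᶜ) := by
  refine isRestrictedEdgeCut_edgesBetween_compl hX hXc fun u => ?_
  by_cases hu : u ∈ X
  · obtain ⟨w, hadj, hw⟩ := exists_adj_mem_of_two_le_fiberCard (G := G) (h₁ u hu)
    exact ⟨w, hadj, iff_of_true hu hw⟩
  · obtain ⟨w, hadj, hw⟩ := exists_adj_mem_of_two_le_fiberCard (G := G) (h₂ u hu)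
    exact ⟨w, hadj, iff_of_false hu hw⟩

theorem min_le_ncard_of_isRestrictedEdgeCut [Nonempty V] (hn : 4 ≤ n)
    {S : Set (Sym2 (V × Fin n))}
    (hS : IsRestrictedEdgeCut (strongProd G (completeGraph (Fin n))) S) :
    min (n ^ 2 * edgeConn G) (2 * n * minDeg G + 2 * n - 4) ≤ S.ncard := by
  have : Nonempty (Fin n) := ⟨⟨0, by omega⟩⟩
  obtain ⟨-, hdisc, hsupp⟩ := hS
  obtain ⟨X, ⟨u, hu⟩, ⟨v, hv⟩, hXS, hXadj⟩ := exists_edgesBetween_compl_subset hdisc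
  have hside : ∀ u, ∃ w, (strongProd G (completeGraph (Fin n))).Adj u w ∧ (u ∈ X ↔ w ∈ X) :=
    fun u => (exists_adj_of_two_le_ncard_supp (hsupp u)).imp fun w hw =>
      ⟨(deleteEdges_adj.1 hw).1, hXadj u w hw⟩
  have hside' : ∀ u, ∃ w, (strongProd G (completeGraph (Fin n))).Adj u w ∧ (u ∈ Xᶜ ↔ w ∈ Xᶜ) :=
    fun u => (hside u).imp fun w h => ⟨h.1, not_congr h.2⟩
  have hlt : ∀ x, 0 < fiberCard Xᶜ x ↔ fiberCard X x < n := fun x => by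
    have := fiberCard_le X x
    rw [fiberCard_compl]
    omega
  calc min (n ^ 2 * edgeConn G) (2 * n * minDeg G + 2 * n - 4)
      ≤ cutWeight G n (fiberCard X) := by
        refine min_le_cutWeight hn (fiberCard_le X) ⟨u.1, fiberCard_pos hu⟩
          ⟨v.1, (hlt v.1).1 (fiberCard_pos hv)⟩ (fun x hx => exists_adj_fiberCard_pos hside hx)
          (fun x hx => ?_)
        obtain ⟨y, hadj, hy⟩ := exists_adj_fiberCard_pos hside' (x := x)
          (by rw [fiberCard_compl, hx]; omega)
        exact ⟨y, hadj, (hlt y).1 hy⟩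
    _ = (edgesBetween (strongProd G (completeGraph (Fin n))) X Xᶜ).ncard :=
        (ncard_edgesBetween_compl_strongProd X).symm
    _ ≤ S.ncard := Set.ncard_le_ncard hXS

theorem exists_isRestrictedEdgeCut_ncard_le_sq_mul_edgeConn (hm : 2 ≤ Fintype.card V)
    (hn : 2 ≤ n) : ∃ S, IsRestrictedEdgeCut (strongProd G (completeGraph (Fin n))) S ∧
      S.ncard ≤ n ^ 2 * edgeConn G := by
  have : Nonempty V := Fintype.card_pos_iff.1 (by omega)
  obtain ⟨F, -, hF, hFdisc⟩ := exists_ncard_eq_edgeConn (H := G) hm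
  obtain ⟨Y, ⟨y, hy⟩, ⟨z, hz⟩, hYF, -⟩ := exists_edgesBetween_compl_subset hFdisc
  set X : Set (V × Fin n) := Prod.fst ⁻¹' Y
  have hfib : ∀ x, fiberCard X x = if x ∈ Y then n else 0 := fun x => by
    split_ifs with hx <;> simp [fiberCard, X, hx]
  have i : Fin n := ⟨0, by omega⟩
  refine ⟨_, isRestrictedEdgeCut_edgesBetween_compl_strongProd (X := X) ⟨(y, i), hy⟩ ⟨(z, i), hz⟩
    (fun u (hu : u.1 ∈ Y) => by rw [hfib, if_pos hu]; exact hn)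
    (fun u (hu : u.1 ∉ Y) => by rw [fiberCard_compl, hfib, if_neg hu]; omega), ?_⟩
  calc _ = cutWeight G n (fiberCard X) := ncard_edgesBetween_compl_strongProd X
    _ = n ^ 2 * (edgesBetween G Y Yᶜ).ncard := by
        rw [cutWeight, sum_eq_zero fun x _ => by rw [hfib]; split_ifs <;> simp, zero_add,
          ncard_edgesBetween_compl, mul_sum]
        refine sum_congr rfl fun x _ => ?_
        rw [mul_sum]
        refine sum_congr rfl fun y _ => ?_
        rw [hfib, hfib]
        split_ifs <;> simp_all [sq]
    _ ≤ n ^ 2 * edgeConn G := Nat.mul_le_mul_left _ (hF ▸ Set.ncard_le_ncard hYF)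

theorem exists_isRestrictedEdgeCut_ncard_eq_two_mul_mul_minDeg_add [Nonempty V] (hn : 4 ≤ n) :
    ∃ S, IsRestrictedEdgeCut (strongProd G (completeGraph (Fin n))) S ∧
      S.ncard = 2 * n * minDeg G + 2 * n - 4 := by
  obtain ⟨v, hv⟩ := exists_deg_eq_minDeg (H := G)
  obtain ⟨T, -, hT⟩ := exists_subset_card_eq (s := (univ : Finset (Fin n))) (n := 2)
    (by rw [card_univ, Fintype.card_fin]; omega)
  set X : Set (V × Fin n) := {u | u.1 = v ∧ u.2 ∈ T}
  have hfib : ∀ x, fiberCard X x = if x = v then 2 else 0 := fun x => by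
    split_ifs with hx
    · subst hx
      simpa [fiberCard, X] using hT
    · simp [fiberCard, X, hx]
  obtain ⟨i, hi⟩ := exists_mem_of_fiberCard_pos (X := X) (x := v) (by rw [hfib, if_pos rfl]; omega)
  obtain ⟨j, hj⟩ := exists_mem_of_fiberCard_pos (X := Xᶜ) (x := v)
    (by rw [fiberCard_compl, hfib, if_pos rfl]; omega)
  refine ⟨_, isRestrictedEdgeCut_edgesBetween_compl_strongProd ⟨_, hi⟩ ⟨_, hj⟩
    (fun u (hu : u.1 = v ∧ u.2 ∈ T) => by rw [hfib, if_pos hu.1])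
    (fun u _ => by rw [fiberCard_compl, hfib]; split_ifs <;> omega), ?_⟩
  have hvert : ∑ x, fiberCard X x * (n - fiberCard X x) = 2 * (n - 2) := by
    rw [sum_eq_single v (fun x _ hx => by rw [hfib, if_neg hx, zero_mul]) (by simp), hfib,
      if_pos rfl]
  have hedge : ∑ x, ∑ y ∈ G.neighborFinset x, fiberCard X x * (n - fiberCard X y) =
      ∑ x, ∑ y ∈ G.neighborFinset x, if x = v then 2 * n else 0 := by
    refine sum_congr rfl fun x _ => sum_congr rfl fun y hy => ?_
    rw [hfib, hfib]
    by_cases hx : x = v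
    · subst hx
      simp [((mem_neighborFinset _ _ _).1 hy).ne']
    · simp [hx]
  rw [ncard_edgesBetween_compl_strongProd, cutWeight, hvert, hedge, sum_sum_neighborFinset_ite_eq,
    sum_const, card_neighborFinset_eq_degree, ← deg_eq_degree, hv, smul_eq_mul,
    show minDeg G * (2 * n) = 2 * n * minDeg G by ring]
  omega

end Cuts

lemma two_mul_mul_minDeg_add_le {V : Type*} [Fintype V] (G : SimpleGraph V)
    (hm : 2 ≤ Fintype.card V) {n : ℕ} (hn : 2 ≤ n) :
    2 * n * minDeg G + 2 * n - 4 ≤ (n - 1) * (Fintype.card V + 2 * numEdges G) := by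
  have : Nonempty V := Fintype.card_pos_iff.1 (by omega)
  obtain ⟨v, hv⟩ := exists_deg_eq_minDeg (H := G)
  refine two_mul_mul_add_le_sub_one_mul hn hm ?_ ?_
  · rw [← hv, deg_eq_degree]
    exact G.degree_lt_card_verts v
  · rw [numEdges_eq_card_edgeFinset, ← sum_degrees_eq_twice_card_edges, ← card_univ,
      ← smul_eq_mul, ← sum_const]
    exact sum_le_sum fun x _ => deg_eq_degree (H := G) x ▸ minDeg_le_deg x

theorem restEdgeConn_strongProd_completeGraph_general {V : Type*} [Fintype V]
    (G : SimpleGraph V) (m n : ℕ) (hm : Fintype.card V = m) (hnt : 2 ≤ m)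
    (hn : 4 ≤ n) :
    restEdgeConn (strongProd G (SimpleGraph.completeGraph (Fin n))) =
      min (min (n ^ 2 * edgeConn G) ((n - 1) * (m + 2 * numEdges G)))
        (2 * n * minDeg G + 2 * n - 4) := by
  subst hm
  have : Nonempty V := Fintype.card_pos_iff.1 (by omega)
  obtain ⟨S₁, hS₁, hS₁card⟩ :=
    exists_isRestrictedEdgeCut_ncard_le_sq_mul_edgeConn (G := G) hnt (show 2 ≤ n by omega)
  obtain ⟨S₂, hS₂, hS₂card⟩ :=
    exists_isRestrictedEdgeCut_ncard_eq_two_mul_mul_minDeg_add (G := G) hn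
  have hlow := le_restEdgeConn hS₂ fun S hS => min_le_ncard_of_isRestrictedEdgeCut hn hS
  have := restEdgeConn_le_ncard hS₁
  have := restEdgeConn_le_ncard hS₂
  have := two_mul_mul_minDeg_add_le G hnt (show 2 ≤ n by omega)
  omega

theorem restEdgeConn_strongProd_completeGraph {V : Type*} [Fintype V]
    (G : SimpleGraph V) (m n : ℕ) (hm : Fintype.card V = m) (hnt : 2 ≤ m)
    (hG : G.Connected) (hn : 4 ≤ n) :
    restEdgeConn (strongProd G (SimpleGraph.completeGraph (Fin n))) =
      min (min (n ^ 2 * edgeConn G) ((n - 1) * (m + 2 * numEdges G)))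
        (2 * n * minDeg G + 2 * n - 4) :=
  restEdgeConn_strongProd_completeGraph_general G m n hm hnt hn
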